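/- Let 1 ≤ m ≤ n, let d_1,…,d_m, b_1,…,b_{n−1} be real numbers, and define F : R^{m+n−1} → R^{m+n−1} by F_i(θ) = d_i − Σ_{j=1}^n e^{α_i+β_j}/(1+e^{α_i+β_j}) for i = 1,…,m and F_{m+j}(θ) = b_j − Σ_{i=1}^m e^{α_i+β_j}/(1+e^{α_i+β_j}) for j = 1,…,n−1 (with β_n = 0). Then for all x, y, v ∈ R^{m+n−1}: ‖[F′(x) − F′(y)]v‖_∞ ≤ n ‖x − y‖_∞ ‖v‖_∞, where F′ denotes the Jacobian matrix of F. -/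

import Mathlib

open MeasureTheory ProbabilityTheory Filter Matrix Topology
open scoped ENNReal NNReal

noncomputable section

namespace Affiliation

/-- Index type for the parameter vector `θ ∈ ℝ^{m+n-1}`:
`Sum.inl i` corresponds to the coordinate `α_i` (`1 ≤ i ≤ m`),
`Sum.inr j` to the coordinate `β_j` (`1 ≤ j ≤ n-1`). -/
abbrev Idx (m n : ℕ) := Fin m ⊕ Fin (n - 1)

/-- The logistic function `e^x / (1 + e^x)`. -/
def pf (x : ℝ) : ℝ := Real.exp x / (1 + Real.exp x)

/-- `e^x / (1 + e^x)^2`, the derivative of the logistic function. -/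
def pf' (x : ℝ) : ℝ := Real.exp x / (1 + Real.exp x) ^ 2

variable {m n : ℕ} {Ω : Type*}

/-- `α_i` read off from `θ`. -/
def alphaF (θ : Idx m n → ℝ) (i : Fin m) : ℝ := θ (Sum.inl i)

/-- `β_j` read off from `θ`, with the convention `β_n = 0`. -/
def betaF (θ : Idx m n → ℝ) (j : Fin n) : ℝ :=
  if h : (j : ℕ) < n - 1 then θ (Sum.inr ⟨j, h⟩) else 0

/-- The degree `d_i = Σ_j x_{ij}` of event `i`. -/
def degVec (X : Fin m → Fin n → Ω → ℝ) (ω : Ω) (i : Fin m) : ℝ := ∑ j, X i j ω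

/-- The degree `b_j = Σ_i x_{ij}` of actor `j`. -/
def bVec (X : Fin m → Fin n → Ω → ℝ) (ω : Ω) (j : Fin n) : ℝ := ∑ i, X i j ω

/-- The vector `g = (d_1, …, d_m, b_1, …, b_{n-1})`. -/
def gvec (X : Fin m → Fin n → Ω → ℝ) (ω : Ω) : Idx m n → ℝ :=
  Sum.elim (degVec X ω) (fun j => bVec X ω (Fin.castLE (Nat.sub_le n 1) j))

/-- The affiliation network model: the `x_{ij}` are mutually independent `{0,1}`-valued
random variables with `P(x_{ij} = 1) = e^{α_i+β_j}/(1+e^{α_i+β_j})` (convention `β_n = 0`). -/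
structure IsAffilModel [MeasurableSpace Ω] (P : Measure Ω)
    (θ : Idx m n → ℝ) (X : Fin m → Fin n → Ω → ℝ) : Prop where
  isProb : IsProbabilityMeasure P
  meas : ∀ i j, Measurable (X i j)
  binary : ∀ i j ω, X i j ω = 0 ∨ X i j ω = 1
  indep : iIndepFun
    (fun p : Fin m × Fin n => X p.1 p.2) P
  prob_one : ∀ i j, P {ω | X i j ω = 1} = ENNReal.ofReal (pf (alphaF θ i + betaF θ j))

/-- The expectation `E g`. -/
def Eg [MeasurableSpace Ω] (P : Measure Ω) (X : Fin m → Fin n → Ω → ℝ) (k : Idx m n) : ℝ :=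
  ∫ ω, gvec X ω k ∂P

/-- The likelihood equations: `θ` is an MLE for the observed degrees `(d, b)`. -/
def IsMLE (d : Fin m → ℝ) (b : Fin (n - 1) → ℝ) (θ : Idx m n → ℝ) : Prop :=
  (∀ i, d i = ∑ j : Fin n, pf (alphaF θ i + betaF θ j)) ∧
  (∀ j : Fin (n - 1), b j = ∑ i : Fin m, pf (alphaF θ i + θ (Sum.inr j)))

/-- `θ` is an MLE for the degrees observed at the sample point `ω`. -/
def IsMLEat (X : Fin m → Fin n → Ω → ℝ) (ω : Ω) (θ : Idx m n → ℝ) : Prop :=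
  IsMLE (degVec X ω) (fun j => bVec X ω (Fin.castLE (Nat.sub_le n 1) j)) θ

/-- The Fisher information matrix `V(θ)`. -/
def fisher (θ : Idx m n → ℝ) : Matrix (Idx m n) (Idx m n) ℝ :=
  fun k l => match k, l with
  | Sum.inl i, Sum.inl i' => if i = i' then ∑ j : Fin n, pf' (alphaF θ i + betaF θ j) else 0
  | Sum.inl i, Sum.inr j => pf' (alphaF θ i + θ (Sum.inr j))
  | Sum.inr j, Sum.inl i => pf' (alphaF θ i + θ (Sum.inr j))
  | Sum.inr j, Sum.inr j' => if j = j' then ∑ i : Fin m, pf' (alphaF θ i + θ (Sum.inr j)) else 0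

/-- `v_{i,m+n} := v_{ii} - Σ_{j ≠ i} v_{ij}`. -/
def vRem (V : Matrix (Idx m n) (Idx m n) ℝ) (i : Idx m n) : ℝ :=
  V i i - ∑ j ∈ Finset.univ.erase i, V i j

/-- `v_{m+n,m+n} := Σ_{i=1}^{m+n-1} v_{i,m+n}`. -/
def vnnOf (V : Matrix (Idx m n) (Idx m n) ℝ) : ℝ := ∑ i, vRem V i

/-- `v_{m+n,m+n}` for the Fisher information matrix,
`Σ_{i=1}^m (v_{ii} - Σ_{j=m+1}^{m+n-1} v_{ij})`. -/
def vnnFisher (θ : Idx m n → ℝ) : ℝ :=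
  ∑ i : Fin m,
    (fisher θ (Sum.inl i) (Sum.inl i) - ∑ j : Fin (n - 1), fisher θ (Sum.inl i) (Sum.inr j))

/-- The approximating matrix `S` built from `V`, with `1/v_{m+n,m+n}` replaced by `1/c`. -/
def approxSWith (V : Matrix (Idx m n) (Idx m n) ℝ) (c : ℝ) : Matrix (Idx m n) (Idx m n) ℝ :=
  fun k l => match k, l with
  | Sum.inl i, Sum.inl i' => (if i = i' then (V (Sum.inl i) (Sum.inl i))⁻¹ else 0) + c⁻¹
  | Sum.inr j, Sum.inr j' => (if j = j' then (V (Sum.inr j) (Sum.inr j))⁻¹ else 0) + c⁻¹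
  | _, _ => -c⁻¹

/-- The approximating matrix `S` built from a matrix `V` in the class `L_{m,n}(q,Q)`. -/
def approxS (V : Matrix (Idx m n) (Idx m n) ℝ) : Matrix (Idx m n) (Idx m n) ℝ :=
  approxSWith V (vnnOf V)

/-- The approximating matrix `S` built from the Fisher information matrix `V(θ)`. -/
def fisherS (θ : Idx m n → ℝ) : Matrix (Idx m n) (Idx m n) ℝ :=
  approxSWith (fisher θ) (vnnFisher θ)

/-- Membership in the matrix class `L_{m,n}(q,Q)`. -/
structure MemL (m n : ℕ) (q Q : ℝ) (V : Matrix (Idx m n) (Idx m n) ℝ) : Prop where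
  symm : V.IsSymm
  nonneg : ∀ i j, 0 ≤ V i j
  zero_ll : ∀ a b : Fin m, a ≠ b → V (Sum.inl a) (Sum.inl b) = 0
  zero_rr : ∀ a b : Fin (n - 1), a ≠ b → V (Sum.inr a) (Sum.inr b) = 0
  cross_lb : ∀ (a : Fin m) (b : Fin (n - 1)), q ≤ V (Sum.inl a) (Sum.inr b)
  cross_ub : ∀ (a : Fin m) (b : Fin (n - 1)), V (Sum.inl a) (Sum.inr b) ≤ Q
  diag_l_lb : ∀ a : Fin m,
    q ≤ V (Sum.inl a) (Sum.inl a) - ∑ b : Fin (n - 1), V (Sum.inl a) (Sum.inr b)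
  diag_l_ub : ∀ a : Fin m,
    V (Sum.inl a) (Sum.inl a) - ∑ b : Fin (n - 1), V (Sum.inl a) (Sum.inr b) ≤ Q
  diag_r : ∀ b : Fin (n - 1), V (Sum.inr b) (Sum.inr b) = ∑ a : Fin m, V (Sum.inl a) (Sum.inr b)

/-- `‖A‖ := max_{i,j} |a_{ij}|`. -/
def matNorm (A : Matrix (Idx m n) (Idx m n) ℝ) : ℝ :=
  ‖fun p : Idx m n × Idx m n => A p.1 p.2‖

/-- The index (0-based) `i` of `θ ∈ ℝ^{m+n-1}` as an element of `Idx m n`, if it exists. -/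
def coordIdx (m n i : ℕ) : Option (Idx m n) :=
  if h : i < m then some (Sum.inl ⟨i, h⟩)
  else if h' : i - m < n - 1 then some (Sum.inr ⟨i - m, h'⟩)
  else none

/-- The `i`-th coordinate (0-based) of a vector `x ∈ ℝ^{m+n-1}` (junk value `0` out of range). -/
def coordVal (x : Idx m n → ℝ) (i : ℕ) : ℝ := ((coordIdx m n i).map x).getD 0

/-- The upper-left `k × k` block of a matrix indexed by `Idx m n`. -/
def blockK (A : Matrix (Idx m n) (Idx m n) ℝ) (k : ℕ) : Matrix (Fin k) (Fin k) ℝ :=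
  fun i j => match coordIdx m n (i : ℕ), coordIdx m n (j : ℕ) with
    | some a, some b => A a b
    | _, _ => 0

/-- The inverse square root `A^{-1/2}` of a positive semidefinite matrix
(junk value `0` if `A` is not positive semidefinite). -/
def invSqrt {k : ℕ} (A : Matrix (Fin k) (Fin k) ℝ) : Matrix (Fin k) (Fin k) ℝ :=
  letI := Classical.propDecidable A.PosSemidef
  if h : A.PosSemidef then
    ((h.1.eigenvectorUnitary : Matrix (Fin k) (Fin k) ℝ) *
      diagonal (fun i => Real.sqrt (h.1.eigenvalues i)) *
      (star h.1.eigenvectorUnitary : Matrix (Fin k) (Fin k) ℝ))⁻¹ else 0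

/-- The standard Gaussian distribution `N(0, I_k)` on `ℝ^k`. -/
def stdGaussian (k : ℕ) : Measure (Fin k → ℝ) :=
  Measure.pi fun _ => gaussianReal 0 1

/-- The function `F(θ)` whose components are
`F_i(θ) = d_i - Σ_k f(α_i + β_k)` and `F_{m+j}(θ) = b_j - Σ_k f(α_k + β_j)`. -/
def Fvec (f : ℝ → ℝ) (d : Fin m → ℝ) (b : Fin (n - 1) → ℝ) (θ : Idx m n → ℝ) : Idx m n → ℝ :=
  fun k => match k with
  | Sum.inl i => d i - ∑ j : Fin n, f (alphaF θ i + betaF θ j)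
  | Sum.inr j => b j - ∑ i : Fin m, f (alphaF θ i + θ (Sum.inr j))

/-- The Jacobian matrix `F'(θ)` of `Fvec f d b`. -/
def jacF (f : ℝ → ℝ) (θ : Idx m n → ℝ) : Matrix (Idx m n) (Idx m n) ℝ :=
  fun k l => match k, l with
  | Sum.inl i, Sum.inl i' =>
      if i = i' then -∑ j : Fin n, deriv f (alphaF θ i + betaF θ j) else 0
  | Sum.inl i, Sum.inr j => -deriv f (alphaF θ i + θ (Sum.inr j))
  | Sum.inr j, Sum.inl i => -deriv f (alphaF θ i + θ (Sum.inr j))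
  | Sum.inr j, Sum.inr j' =>
      if j = j' then -∑ i : Fin m, deriv f (alphaF θ i + θ (Sum.inr j)) else 0

/-- The Newton iterates `θ^{(k+1)} = θ^{(k)} - [F'(θ^{(k)})]⁻¹ F(θ^{(k)})`. -/
def newton (f : ℝ → ℝ) (d : Fin m → ℝ) (b : Fin (n - 1) → ℝ) (θ0 : Idx m n → ℝ) :
    ℕ → Idx m n → ℝ
  | 0 => θ0
  | k + 1 =>
    newton f d b θ0 k - (jacF f (newton f d b θ0 k))⁻¹.mulVec (Fvec f d b (newton f d b θ0 k))

/-!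
Every entry of `F'(x) - F'(y)` is a difference of values of `f' = pf'` at points `α_i + β_j`
which move by at most `2‖x - y‖_∞`. Since `|pf''| ≤ 1/4`, each such difference is at most
`‖x - y‖_∞ / 2`. An `α`-row of `F'(x) - F'(y)` collects `n` of them on the diagonal and `n - 1`
off it, a `β`-row `m` and `m`, so with `m ≤ n` every absolute row sum is at most `n ‖x - y‖_∞`,
and the absolute row sums bound the `ℓ^∞` operator norm.
-/

lemma norm_mulVec_le_of_sum_norm_le {R ι κ : Type*} [NonUnitalSeminormedRing R]
    [Fintype ι] [Fintype κ] {A : Matrix ι κ R} {C : ℝ} (hC : 0 ≤ C)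
    (hA : ∀ i, ∑ j, ‖A i j‖ ≤ C) (v : κ → R) : ‖A *ᵥ v‖ ≤ C * ‖v‖ := by
  refine (pi_norm_le_iff_of_nonneg (by positivity)).2 fun i => ?_
  calc ‖(A *ᵥ v) i‖ = ‖∑ j, A i j * v j‖ := rfl
    _ ≤ ∑ j, ‖A i j‖ * ‖v‖ :=
      norm_sum_le_of_le _ fun j _ => (norm_mul_le _ _).trans <| by gcongr; exact norm_le_pi_norm v j
    _ ≤ C * ‖v‖ := by rw [← Finset.sum_mul]; gcongr; exact hA i

lemma abs_sub_apply_le_norm_sub {ι : Type*} [Fintype ι] (x y : ι → ℝ) (k : ι) :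
    |x k - y k| ≤ ‖x - y‖ := by
  simpa [Real.norm_eq_abs] using norm_le_pi_norm (x - y) k

lemma abs_sub_le_two_mul_of_lipschitzWith {f : ℝ → ℝ} {L : ℝ≥0} (hf : LipschitzWith L f)
    {a a' b b' δ : ℝ} (ha : |a - a'| ≤ δ) (hb : |b - b'| ≤ δ) :
    |f (a + b) - f (a' + b')| ≤ 2 * L * δ := by
  have := hf.dist_le_mul (a + b) (a' + b')
  rw [Real.dist_eq, Real.dist_eq] at this
  calc |f (a + b) - f (a' + b')| ≤ L * |a - a' + (b - b')| := by convert this using 3; ring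
    _ ≤ L * (δ + δ) := by gcongr; exact (abs_add_le _ _).trans (add_le_add ha hb)
    _ = 2 * L * δ := by ring

lemma hasDerivAt_pf (t : ℝ) : HasDerivAt pf (pf' t) t := by
  have hpos : (1 : ℝ) + Real.exp t ≠ 0 := by positivity
  refine ((Real.hasDerivAt_exp t).div ((Real.hasDerivAt_exp t).const_add 1) hpos).congr_deriv ?_
  unfold pf'
  field_simp
  ring

lemma deriv_pf : deriv pf = pf' := funext fun t => (hasDerivAt_pf t).deriv

lemma hasDerivAt_pf' (t : ℝ) :
    HasDerivAt pf' (Real.exp t * (1 - Real.exp t) / (1 + Real.exp t) ^ 3) t := by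
  have hsq : HasDerivAt (fun x => (1 + Real.exp x) ^ 2)
      ((2 : ℕ) * (1 + Real.exp t) ^ 1 * Real.exp t) t :=
    ((Real.hasDerivAt_exp t).const_add 1).pow 2
  have hpos : (1 + Real.exp t) ^ 2 ≠ 0 := by positivity
  refine ((Real.hasDerivAt_exp t).div hsq hpos).congr_deriv ?_
  have hpos' : (1 : ℝ) + Real.exp t ≠ 0 := by positivity
  field_simp
  ring

lemma lipschitzWith_pf' : LipschitzWith (1 / 4) pf' := by
  refine lipschitzWith_of_nnnorm_deriv_le (fun t => (hasDerivAt_pf' t).differentiableAt)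
    fun t => ?_
  rw [← NNReal.coe_le_coe, coe_nnnorm, Real.norm_eq_abs, (hasDerivAt_pf' t).deriv]
  set u := Real.exp t
  have hu : 0 < u := Real.exp_pos t
  -- `|u (1 - u)| ≤ u (1 + u)`, and `u (1 + u) / (1 + u) ^ 3 ≤ 1 / 4` as `4 u ≤ (1 + u) ^ 2`
  have hnum : |u * (1 - u)| ≤ u * (1 + u) := by
    rw [abs_mul, abs_of_pos hu]
    gcongr
    exact abs_le.2 ⟨by linarith, by linarith⟩
  rw [abs_div, abs_of_pos (by positivity : (0 : ℝ) < (1 + u) ^ 3), div_le_iff₀ (by positivity)]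
  push_cast
  nlinarith [mul_nonneg (mul_nonneg hu.le (by positivity : (0 : ℝ) ≤ 1 + u)) (sq_nonneg (1 - u))]

section Jacobian

variable {f : ℝ → ℝ} {L : ℝ≥0} (x y : Idx m n → ℝ)

lemma abs_betaF_sub_le (j : Fin n) : |betaF x j - betaF y j| ≤ ‖x - y‖ := by
  unfold betaF
  split
  · exact abs_sub_apply_le_norm_sub x y _
  · simp

lemma sum_abs_jacF_sub_inl_le (hf : LipschitzWith L (deriv f)) (i : Fin m) :
    ∑ l, |(jacF f x - jacF f y) (Sum.inl i) l| ≤ 2 * n * (2 * L * ‖x - y‖) := by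
  have hα : |alphaF x i - alphaF y i| ≤ ‖x - y‖ := abs_sub_apply_le_norm_sub x y (Sum.inl i)
  have hdiag : |(jacF f x - jacF f y) (Sum.inl i) (Sum.inl i)| ≤ n * (2 * L * ‖x - y‖) := by
    simp only [Matrix.sub_apply, jacF, if_true, neg_sub_neg, ← Finset.sum_sub_distrib]
    refine (Finset.abs_sum_le_sum_abs _ _).trans ?_
    calc _ ≤ ∑ _j : Fin n, 2 * L * ‖x - y‖ := Finset.sum_le_sum fun j _ =>
          (abs_sub_comm _ _).trans_le <|
            abs_sub_le_two_mul_of_lipschitzWith hf hα (abs_betaF_sub_le x y j)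
      _ = n * (2 * L * ‖x - y‖) := by simp
  have hcross : ∑ j : Fin (n - 1), |(jacF f x - jacF f y) (Sum.inl i) (Sum.inr j)|
      ≤ n * (2 * L * ‖x - y‖) := by
    calc _ ≤ ∑ _j : Fin (n - 1), 2 * L * ‖x - y‖ := Finset.sum_le_sum fun j _ => by
          simpa only [Matrix.sub_apply, jacF, neg_sub_neg, abs_sub_comm] using
            abs_sub_le_two_mul_of_lipschitzWith hf hα (abs_sub_apply_le_norm_sub x y (Sum.inr j))
      _ = (n - 1 : ℕ) * (2 * L * ‖x - y‖) := by simp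
      _ ≤ n * (2 * L * ‖x - y‖) := by gcongr; omega
  rw [Fintype.sum_sum_type, Fintype.sum_eq_single i fun i' hi' => by simp [jacF, Ne.symm hi']]
  linarith

lemma sum_abs_jacF_sub_inr_le (hf : LipschitzWith L (deriv f)) (j : Fin (n - 1)) :
    ∑ l, |(jacF f x - jacF f y) (Sum.inr j) l| ≤ 2 * m * (2 * L * ‖x - y‖) := by
  have hentry (i : Fin m) :
      |deriv f (alphaF x i + x (Sum.inr j)) - deriv f (alphaF y i + y (Sum.inr j))|
        ≤ 2 * L * ‖x - y‖ :=
    abs_sub_le_two_mul_of_lipschitzWith hf (abs_sub_apply_le_norm_sub x y (Sum.inl i))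
      (abs_sub_apply_le_norm_sub x y (Sum.inr j))
  have hdiag : |(jacF f x - jacF f y) (Sum.inr j) (Sum.inr j)| ≤ m * (2 * L * ‖x - y‖) := by
    simp only [Matrix.sub_apply, jacF, if_true, neg_sub_neg, ← Finset.sum_sub_distrib]
    refine (Finset.abs_sum_le_sum_abs _ _).trans ?_
    calc _ ≤ ∑ _i : Fin m, 2 * L * ‖x - y‖ := Finset.sum_le_sum fun i _ =>
          (abs_sub_comm _ _).trans_le (hentry i)
      _ = m * (2 * L * ‖x - y‖) := by simp
  have hcross : ∑ i : Fin m, |(jacF f x - jacF f y) (Sum.inr j) (Sum.inl i)|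
      ≤ m * (2 * L * ‖x - y‖) := by
    calc _ ≤ ∑ _i : Fin m, 2 * L * ‖x - y‖ := Finset.sum_le_sum fun i _ => by
          simpa only [Matrix.sub_apply, jacF, neg_sub_neg, abs_sub_comm] using hentry i
      _ = m * (2 * L * ‖x - y‖) := by simp
  rw [Fintype.sum_sum_type, Fintype.sum_eq_single j fun j' hj' => by simp [jacF, Ne.symm hj']]
  linarith

theorem norm_jacF_sub_mulVec_le (hf : LipschitzWith L (deriv f)) (hmn : m ≤ n)
    (v : Idx m n → ℝ) : ‖(jacF f x - jacF f y) *ᵥ v‖ ≤ 4 * L * n * ‖x - y‖ * ‖v‖ := by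
  refine norm_mulVec_le_of_sum_norm_le (by positivity) (fun k => ?_) v
  simp only [Real.norm_eq_abs]
  cases k with
  | inl i => linarith [sum_abs_jacF_sub_inl_le x y hf i]
  | inr j =>
    have hrow := sum_abs_jacF_sub_inr_le x y hf j
    have hmn' : 2 * m * (2 * L * ‖x - y‖) ≤ 2 * n * (2 * L * ‖x - y‖) := by gcongr
    linarith

end Jacobian

theorem jacobian_lipschitz_general (m n : ℕ) (hmn : m ≤ n)
    (x y v : Idx m n → ℝ) :
    ‖(jacF pf x - jacF pf y).mulVec v‖ ≤ (n : ℝ) * ‖x - y‖ * ‖v‖ := by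
  have h := norm_jacF_sub_mulVec_le x y (deriv_pf ▸ lipschitzWith_pf') hmn v
  norm_num at h
  exact h

/-- Lipschitz bound `‖[F'(x) - F'(y)] v‖_∞ ≤ n ‖x - y‖_∞ ‖v‖_∞`
for the Jacobian of the likelihood-equation function of the affiliation model. -/
theorem jacobian_lipschitz (m n : ℕ) (hm : 1 ≤ m) (hmn : m ≤ n)
    (d : Fin m → ℝ) (b : Fin (n - 1) → ℝ) (x y v : Idx m n → ℝ) :
    ‖(jacF pf x - jacF pf y).mulVec v‖ ≤ (n : ℝ) * ‖x - y‖ * ‖v‖ :=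
  jacobian_lipschitz_general m n hmn x y v

end Affiliation
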